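/- For all natural numbers l, m, k with m ≤ l, the 2-adic norm of the rational number σ_l^m(k) is at most the 2-adic norm of k! (equivalently, the 2-adic valuation of σ_l^m(k) is at least the 2-adic valuation of k!, with the convention that this holds trivially when σ_l^m(k) = 0). -/

import Mathlib

/-- The coefficient `σ_l^m(k)` of the Holt–Ille polynomial `H_l^m`. -/
def sigmaLM (l m k : ℕ) : ℚ :=
  if (l + m) % 2 = 0 then
    (-2 : ℚ) ^ k * (((l - m) / 2).choose k : ℚ) * (((l + m) / 2).choose k : ℚ) /
      (((2 * k).choose k : ℚ))
  else
    (-2 : ℚ) ^ k * (((l - m) / 2).choose k : ℚ) * (((l + m) / 2).choose k : ℚ) /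
      ((((2 * k).choose k : ℚ)) * (2 * (k : ℚ) + 1))

/-- The value `H_l^m(−2) = Σ_{k=0}^{⌊(l−m)/2⌋} σ_l^m(k)`. -/
def HLM (l m : ℕ) : ℚ := ∑ k ∈ Finset.range ((l - m) / 2 + 1), sigmaLM l m k

/-- `a ≡ b (mod 2^N)` for rationals (with odd denominators), expressed via the 2-adic
norm on `ℚ₂`: it means `‖a − b‖₂ ≤ 2^(−N)`. -/
def Cong2 (a b : ℚ) (N : ℕ) : Prop :=
  ‖((a - b : ℚ) : ℚ_[2])‖ ≤ (2 : ℝ) ^ (-(N : ℤ))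

/-!
Writing `a, b` for the two binomial coefficients, `σ_l^m(k) = ±2^k a b / (C(2k,k) e)` with
`e ∈ {1, 2k+1}` odd. Counting `(2k+1)!` in two ways gives
`(2k+1) · C(2k,k) · k! = 2^k · (2k+1)‼`, and both odd factors are 2-adic units, so
`‖2^k / C(2k,k)‖₂ = ‖k!‖₂`. Hence `‖σ_l^m(k)‖₂ = ‖k!‖₂ ‖a‖₂ ‖b‖₂ ≤ ‖k!‖₂`.
-/

open Nat

namespace Nat

theorem odd_doubleFactorial_two_mul_add_one (k : ℕ) : Odd (2 * k + 1)‼ := by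
  induction k with
  | zero => exact odd_one
  | succ k ih =>
    rw [show 2 * (k + 1) + 1 = 2 * k + 1 + 2 by ring, doubleFactorial_add_two]
    exact (odd_two_mul_add_one (k + 1)).mul ih

theorem two_mul_add_one_mul_centralBinom_mul_factorial (k : ℕ) :
    (2 * k + 1) * centralBinom k * k ! = 2 ^ k * (2 * k + 1)‼ := by
  have hfact : centralBinom k * k ! * k ! = (2 * k)! := by
    simpa [centralBinom_eq_two_mul_choose, two_mul] using
      choose_mul_factorial_mul_factorial (show k ≤ 2 * k by omega)
  apply Nat.eq_of_mul_eq_mul_right (factorial_pos k)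
  calc (2 * k + 1) * centralBinom k * k ! * k ! = (2 * k + 1)! := by
        rw [factorial_succ, ← hfact]; ring
    _ = 2 ^ k * (2 * k + 1)‼ * k ! := by
        rw [factorial_eq_mul_doubleFactorial, doubleFactorial_two_mul]; ring

end Nat

namespace Padic

theorem norm_natCast_eq_one_of_odd {n : ℕ} (hn : Odd n) : ‖(n : ℚ_[2])‖ = 1 :=
  norm_natCast_eq_one_iff.2 (Nat.coprime_two_left.2 hn)

theorem norm_centralBinom_mul_norm_factorial (k : ℕ) :
    ‖(centralBinom k : ℚ_[2])‖ * ‖(k ! : ℚ_[2])‖ = ‖(2 : ℚ_[2])‖ ^ k := by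
  have h := congrArg (fun n : ℕ => ‖(n : ℚ_[2])‖)
    (two_mul_add_one_mul_centralBinom_mul_factorial k)
  simpa only [cast_mul, cast_pow, cast_ofNat, norm_mul, norm_pow, one_mul, mul_one,
    norm_natCast_eq_one_of_odd (odd_two_mul_add_one k),
    norm_natCast_eq_one_of_odd (odd_doubleFactorial_two_mul_add_one k)] using h

end Padic

theorem norm_sigmaLM (l m k : ℕ) :
    ‖((sigmaLM l m k : ℚ) : ℚ_[2])‖ = ‖(k ! : ℚ_[2])‖ *
      ‖(((l - m) / 2).choose k : ℚ_[2])‖ * ‖(((l + m) / 2).choose k : ℚ_[2])‖ := by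
  have hC := Padic.norm_centralBinom_mul_norm_factorial k
  have hC_ne : ‖(centralBinom k : ℚ_[2])‖ ≠ 0 := by simp [centralBinom_ne_zero]
  have hodd : ‖2 * (k : ℚ_[2]) + 1‖ = 1 := by
    exact_mod_cast Padic.norm_natCast_eq_one_of_odd (odd_two_mul_add_one k)
  unfold sigmaLM
  rw [← centralBinom_eq_two_mul_choose]
  split_ifs <;> push_cast <;>
    simp only [norm_mul, norm_div, norm_pow, norm_neg, hodd, mul_one, ← hC] <;> field_simp

theorem sigmaLM_norm_le (l m k : ℕ) :
    ‖((sigmaLM l m k : ℚ) : ℚ_[2])‖ ≤ ‖((k.factorial : ℚ) : ℚ_[2])‖ := by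
  rw [norm_sigmaLM, Rat.cast_natCast, mul_assoc]
  exact mul_le_of_le_one_right (norm_nonneg _) <|
    mul_le_one₀ (IsUltrametricDist.norm_natCast_le_one ℚ_[2] _) (norm_nonneg _)
      (IsUltrametricDist.norm_natCast_le_one ℚ_[2] _)
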